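/- Let f ∈ ℝ[x₁,…,xₙ], let u ∈ ℝⁿ be an H-minimizer of f (∇f(u) = 0 and ∇²f(u) positive semidefinite), and suppose η ∈ ℝ satisfies f − η = φ + σ where φ ∈ ⟨∇f⟩ (the ideal generated by ∂f/∂x₁,…,∂f/∂xₙ) and σ ∈ Q(∇²f). Then η ≤ f(u). Consequently, if f − η ∈ ⟨∇f⟩ + Q(∇²f) then η is at most the smallest H-minimum of f. -/

import Mathlib

open MvPolynomial

noncomputable section

/-- The gradient of `f` vanishes at `x`. -/
def gradZero {n : ℕ} (f : MvPolynomial (Fin n) ℝ) (x : Fin n → ℝ) : Prop :=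
  ∀ i, eval x (pderiv i f) = 0

/-- The Hessian of `f` evaluated at `x`. -/
def hessAt {n : ℕ} (f : MvPolynomial (Fin n) ℝ) (x : Fin n → ℝ) :
    Matrix (Fin n) (Fin n) ℝ :=
  fun i j => eval x (pderiv i (pderiv j f))

/-- `u` is an H-minimizer of `f`: `∇f(u) = 0` and `∇²f(u) ⪰ 0`. -/
def IsHMinimizer {n : ℕ} (f : MvPolynomial (Fin n) ℝ) (u : Fin n → ℝ) : Prop :=
  gradZero f u ∧ (hessAt f u).PosSemidef

/-- `p` is a sum of squares of polynomials. -/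
def IsSOS {n : ℕ} (p : MvPolynomial (Fin n) ℝ) : Prop :=
  ∃ (r : ℕ) (q : Fin r → MvPolynomial (Fin n) ℝ), p = ∑ j, q j ^ 2

/-- The gradient ideal `⟨∇f⟩ = {Σᵢ (∂f/∂xᵢ) pᵢ : pᵢ ∈ ℝ[x]}`. -/
def gradIdeal {n : ℕ} (f : MvPolynomial (Fin n) ℝ) : Set (MvPolynomial (Fin n) ℝ) :=
  {p | ∃ c : Fin n → MvPolynomial (Fin n) ℝ, p = ∑ i, pderiv i f * c i}

/-- The Hessian of `f` as a symmetric matrix polynomial. -/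
def hessPoly {n : ℕ} (f : MvPolynomial (Fin n) ℝ) :
    Matrix (Fin n) (Fin n) (MvPolynomial (Fin n) ℝ) :=
  fun i j => pderiv i (pderiv j f)

/-- The quadratic module `Q(H) = Σ[x] + {Trace(H W) : W = Σ_j a_j a_jᵀ}` of a
symmetric matrix polynomial `H`. -/
def QMat {n ℓ : ℕ} (H : Matrix (Fin ℓ) (Fin ℓ) (MvPolynomial (Fin n) ℝ)) :
    Set (MvPolynomial (Fin n) ℝ) :=
  {p | ∃ σ : MvPolynomial (Fin n) ℝ, IsSOS σ ∧
    ∃ (r : ℕ) (a : Fin r → Fin ℓ → MvPolynomial (Fin n) ℝ),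
      p = σ + ∑ i, ∑ l, H i l * ∑ j, a j i * a j l}

/-!
Evaluate `f - η = φ + σ` at `u`: `φ(u) = 0` because `∇f(u) = 0`, and `σ(u) ≥ 0` because a sum
of squares is nonnegative and `Trace(∇²f(u) W(u)) = Σ_j a_j(u)ᵀ ∇²f(u) a_j(u) ≥ 0` for the
positive semidefinite `∇²f(u)`. Hence `f(u) - η ≥ 0`.
-/

namespace Matrix.PosSemidef

theorem sum_mul_sum_mul_nonneg {ι κ R : Type*} [Fintype ι] [Fintype κ]
    [CommRing R] [PartialOrder R] [IsOrderedAddMonoid R] [StarRing R] [TrivialStar R]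
    {M : Matrix ι ι R} (hM : M.PosSemidef) (v : κ → ι → R) :
    0 ≤ ∑ i, ∑ l, M i l * ∑ j, v j i * v j l := by
  have h : ∑ i, ∑ l, M i l * ∑ j, v j i * v j l = ∑ j, star (v j) ⬝ᵥ M *ᵥ v j := by
    simp only [star_trivial, dotProduct, mulVec, Finset.mul_sum, Finset.sum_comm (γ := κ),
      mul_left_comm]
  rw [h]
  exact Finset.sum_nonneg fun j _ => hM.dotProduct_mulVec_nonneg (v j)

end Matrix.PosSemidef

theorem IsSOS.eval_nonneg {n : ℕ} {p : MvPolynomial (Fin n) ℝ} (hp : IsSOS p) (x : Fin n → ℝ) :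
    0 ≤ eval x p := by
  obtain ⟨r, q, rfl⟩ := hp
  simp only [map_sum, map_pow]
  exact Finset.sum_nonneg fun j _ => sq_nonneg _

theorem eval_eq_zero_of_mem_gradIdeal {n : ℕ} {f p : MvPolynomial (Fin n) ℝ}
    (hp : p ∈ gradIdeal f) {x : Fin n → ℝ} (hx : gradZero f x) : eval x p = 0 := by
  obtain ⟨c, rfl⟩ := hp
  simp only [map_sum, map_mul]
  exact Finset.sum_eq_zero fun i _ => by rw [hx i, zero_mul]

theorem eval_nonneg_of_mem_QMat {n ℓ : ℕ} {H : Matrix (Fin ℓ) (Fin ℓ) (MvPolynomial (Fin n) ℝ)}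
    {p : MvPolynomial (Fin n) ℝ} (hp : p ∈ QMat H) {x : Fin n → ℝ}
    (hx : (H.map (eval x)).PosSemidef) : 0 ≤ eval x p := by
  obtain ⟨σ, hσ, r, a, rfl⟩ := hp
  simp only [map_add, map_sum, map_mul]
  exact add_nonneg (hσ.eval_nonneg x) (hx.sum_mul_sum_mul_nonneg fun j i => eval x (a j i))

theorem IsHMinimizer.le_eval {n : ℕ} {f : MvPolynomial (Fin n) ℝ} {u : Fin n → ℝ}
    (hu : IsHMinimizer f u) {η : ℝ} {φ σ : MvPolynomial (Fin n) ℝ}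
    (hφ : φ ∈ gradIdeal f) (hσ : σ ∈ QMat (hessPoly f)) (heq : f - C η = φ + σ) :
    η ≤ eval u f := by
  have h := congrArg (eval u) heq
  rw [map_sub, eval_C, map_add, eval_eq_zero_of_mem_gradIdeal hφ hu.1, zero_add] at h
  linarith [eval_nonneg_of_mem_QMat hσ hu.2]

/-- If `u` is an H-minimizer of `f` and `f - η = φ + σ` with `φ ∈ ⟨∇f⟩` and
`σ ∈ Q(∇²f)`, then `η ≤ f(u)`; consequently `η` is at most the smallest H-minimum. -/
theorem stmt2 {n : ℕ} (f : MvPolynomial (Fin n) ℝ) (u : Fin n → ℝ)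
    (hu : IsHMinimizer f u) (η : ℝ) (φ σ : MvPolynomial (Fin n) ℝ)
    (hφ : φ ∈ gradIdeal f) (hσ : σ ∈ QMat (hessPoly f))
    (heq : f - C η = φ + σ) :
    η ≤ eval u f ∧
      ∀ f₁ : ℝ, IsLeast {v : ℝ | ∃ w : Fin n → ℝ, IsHMinimizer f w ∧ eval w f = v} f₁ →
        η ≤ f₁ := by
  refine ⟨hu.le_eval hφ hσ heq, fun f₁ hf₁ => ?_⟩
  obtain ⟨w, hw, rfl⟩ := hf₁.1
  exact hw.le_eval hφ hσ heq
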